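/- Let P be an oriented hitomezashi path. If P has at least one horizontal stitch at latitude y, then all of the horizontal stitches of P at latitude y are oriented in the same direction (all west-to-east or all east-to-west). Analogously, if P has at least one vertical stitch at longitude x, then all of the vertical stitches of P at longitude x are oriented in the same direction (all south-to-north or all north-to-south). -/
import Mathlib

/-- The unit segment from `a` to `b` is a stitch of the hitomezashi pattern with labels
`ε` (vertical lines) and `η` (horizontal lines); the four cases record the step direction
(east, west, north, south). -/
def IsStitchStep (ε η : ℤ → ZMod 2) (a b : ℤ × ℤ) : Prop :=
  (b = (a.1 + 1, a.2) ∧ (a.1 : ZMod 2) = η a.2) ∨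
  (b = (a.1 - 1, a.2) ∧ ((a.1 - 1 : ℤ) : ZMod 2) = η a.2) ∨
  (b = (a.1, a.2 + 1) ∧ (a.2 : ZMod 2) = ε a.1) ∨
  (b = (a.1, a.2 - 1) ∧ ((a.2 - 1 : ℤ) : ZMod 2) = ε a.1)

/-- An oriented hitomezashi path in the pattern with labels `ε`, `η`: a sequence of
lattice points `v 0, v 1, …, v len` such that each consecutive pair is joined by a stitch
of the pattern (traversed in the indicated direction), with no repeated vertices. -/
structure HPath (ε η : ℤ → ZMod 2) where
  len : ℕ
  v : ℕ → ℤ × ℤ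
  step : ∀ t < len, IsStitchStep ε η (v t) (v (t+1))
  inj : Set.InjOn v (Set.Iic len)

namespace HitoAux

variable {ε η : ℤ → ZMod 2}

/-- Swap of a step is a step in the swapped pattern. -/
lemma step_swap {a b : ℤ × ℤ} (h : IsStitchStep ε η a b) :
    IsStitchStep η ε (a.2, a.1) (b.2, b.1) := by
  rcases h with ⟨hb, hc⟩ | ⟨hb, hc⟩ | ⟨hb, hc⟩ | ⟨hb, hc⟩
  · exact Or.inr (Or.inr (Or.inl (by rw [hb]; exact ⟨rfl, hc⟩)))
  · exact Or.inr (Or.inr (Or.inr (by rw [hb]; exact ⟨rfl, hc⟩)))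
  · exact Or.inl (by rw [hb]; exact ⟨rfl, hc⟩)
  · exact Or.inr (Or.inl (by rw [hb]; exact ⟨rfl, hc⟩))

/-- The swapped path. -/
def swapPath (P : HPath ε η) : HPath η ε where
  len := P.len
  v := fun t => ((P.v t).2, (P.v t).1)
  step := fun t ht => step_swap (P.step t ht)
  inj := by
    intro s hs t ht h
    apply P.inj hs ht
    simp only [Prod.mk.injEq] at h
    exact Prod.ext h.2 h.1

/-- Characterization of a horizontal step. -/
lemma horiz_char (P : HPath ε η) {t : ℕ} (ht : t < P.len)
    (hH : (P.v (t+1)).2 = (P.v t).2) :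
    ((P.v (t+1)).1 = (P.v t).1 + 1 ∧ ((P.v t).1 : ZMod 2) = η (P.v t).2) ∨
    ((P.v (t+1)).1 = (P.v t).1 - 1 ∧ ((P.v t).1 : ZMod 2) = η (P.v t).2 + 1) := by
  rcases P.step t ht with ⟨hb, hc⟩ | ⟨hb, hc⟩ | ⟨hb, hc⟩ | ⟨hb, hc⟩
  · exact Or.inl ⟨by rw [hb], hc⟩
  · refine Or.inr ⟨by rw [hb], ?_⟩
    push_cast at hc
    linear_combination hc
  · exfalso; rw [hb] at hH; simp only at hH; omega
  · exfalso; rw [hb] at hH; simp only at hH; omega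

/-- Each step is horizontal xor vertical. -/
lemma horiz_iff_not_vert (P : HPath ε η) {t : ℕ} (ht : t < P.len) :
    (P.v (t+1)).2 = (P.v t).2 ↔ ¬ ((P.v (t+1)).1 = (P.v t).1) := by
  rcases P.step t ht with ⟨hb, _⟩ | ⟨hb, _⟩ | ⟨hb, _⟩ | ⟨hb, _⟩ <;>
    rw [hb] <;> simp <;> omega

/-- No two consecutive horizontal steps. -/
lemma no_two_horiz (P : HPath ε η) {t : ℕ} (ht : t + 1 < P.len)
    (h1 : (P.v (t+1)).2 = (P.v t).2) (h2 : (P.v (t+1+1)).2 = (P.v (t+1)).2) : False := by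
  have ht0 : t < P.len := by omega
  rcases horiz_char P ht0 h1 with ⟨he1, hc1⟩ | ⟨he1, hc1⟩ <;>
    rcases horiz_char P ht h2 with ⟨he2, hc2⟩ | ⟨he2, hc2⟩
  · -- east, east : parity contradiction
    rw [he1, h1] at hc2
    push_cast at hc2
    rw [hc1] at hc2
    have : (1 : ZMod 2) = 0 := by linear_combination hc2
    exact one_ne_zero this
  · -- east, west : revisits v t
    have hvv : P.v (t+1+1) = P.v t := by
      apply Prod.ext
      · rw [he2, he1]; ring
      · rw [h2, h1]
    have := P.inj (by simp only [Set.mem_Iic]; omega) (by simp only [Set.mem_Iic]; omega) hvv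
    omega
  · -- west, east : revisits v t
    have hvv : P.v (t+1+1) = P.v t := by
      apply Prod.ext
      · rw [he2, he1]; ring
      · rw [h2, h1]
    have := P.inj (by simp only [Set.mem_Iic]; omega) (by simp only [Set.mem_Iic]; omega) hvv
    omega
  · -- west, west : parity contradiction
    rw [he1, h1] at hc2
    push_cast at hc2
    rw [hc1] at hc2
    have : (1 : ZMod 2) = 0 := by linear_combination -hc2
    exact one_ne_zero this

/-- Steps alternate: horizontal iff the next one is vertical. -/
lemma alt (P : HPath ε η) {t : ℕ} (ht : t + 1 < P.len) :
    ((P.v (t+1)).2 = (P.v t).2 ↔ ¬ ((P.v (t+1+1)).2 = (P.v (t+1)).2)) := by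
  have ht0 : t < P.len := by omega
  constructor
  · intro h1 h2
    exact no_two_horiz P ht h1 h2
  · intro h2
    by_contra h1
    -- both steps vertical; apply no_two_horiz to the swapped path
    have h1' : (P.v (t+1)).1 = (P.v t).1 := by
      by_contra hc
      exact h1 ((horiz_iff_not_vert P ht0).mpr hc)
    have h2' : (P.v (t+1+1)).1 = (P.v (t+1)).1 := by
      by_contra hc
      exact h2 ((horiz_iff_not_vert P ht).mpr hc)
    exact no_two_horiz (swapPath P) ht h1' h2' 

/-- Horizontal steps occur at times of a fixed parity. -/
lemma horiz_parity (P : HPath ε η) :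
    ∀ t, t < P.len → ((P.v (t+1)).2 = (P.v t).2 ↔ ((P.v 1).2 = (P.v 0).2 ↔ Even t)) := by
  intro t
  induction t with
  | zero => intro _; simp
  | succ n ih =>
    intro hn
    have hn0 : n < P.len := by omega
    have halt := alt P hn
    have hih := ih hn0
    rw [Nat.even_add_one]
    tauto

/-- The parity of x+y advances by one each step. -/
lemma coordsum (P : HPath ε η) :
    ∀ t, t ≤ P.len →
      (((P.v t).1 : ZMod 2) + ((P.v t).2 : ZMod 2)) =
      ((P.v 0).1 : ZMod 2) + ((P.v 0).2 : ZMod 2) + (t : ZMod 2) := by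
  intro t
  induction t with
  | zero => intro _; simp
  | succ n ih =>
    intro hn
    have hn0 : n < P.len := by omega
    have hprev := ih (by omega)
    have key : (((P.v (n+1)).1 : ZMod 2) + ((P.v (n+1)).2 : ZMod 2)) =
        ((P.v n).1 : ZMod 2) + ((P.v n).2 : ZMod 2) + 1 := by
      rcases P.step n hn0 with ⟨hb, _⟩ | ⟨hb, _⟩ | ⟨hb, _⟩ | ⟨hb, _⟩ <;> rw [hb] <;>
        push_cast <;> ring_nf <;>
        first
          | rfl
          | (have h2 : (2 : ZMod 2) = 0 := by decide
             linear_combination h2)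
    rw [key, hprev]
    push_cast
    ring
  

/-- All horizontal stitches at a fixed latitude are oriented the same way. -/
lemma horiz_half (P : HPath ε η) :
    ∀ t1 t2 : ℕ, t1 < P.len → t2 < P.len →
      (P.v (t1+1)).2 = (P.v t1).2 → (P.v (t2+1)).2 = (P.v t2).2 →
      (P.v t1).2 = (P.v t2).2 →
      (P.v (t1+1)).1 - (P.v t1).1 = (P.v (t2+1)).1 - (P.v t2).1 := by
  intro t1 t2 h1 h2 hH1 hH2 hy
  -- t1 and t2 have the same parity
  have hp1 := (horiz_parity P t1 h1).mp hH1
  have hp2 := (horiz_parity P t2 h2).mp hH2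
  have hev : Even t1 ↔ Even t2 := by tauto
  have htcast : (t1 : ZMod 2) = (t2 : ZMod 2) := by
    have hmod : t1 % 2 = t2 % 2 := by
      simp only [Nat.even_iff] at hev
      omega
    rw [ZMod.natCast_eq_natCast_iff]
    exact hmod
  -- hence the starting x-coordinates have the same parity
  have hc1 := coordsum P t1 (by omega)
  have hc2 := coordsum P t2 (by omega)
  have hx : ((P.v t1).1 : ZMod 2) = ((P.v t2).1 : ZMod 2) := by
    rw [hy] at hc1
    rw [htcast] at hc1
    have := hc1.trans hc2.symm
    exact add_right_cancel this
  -- now compare the direction characterizations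
  rcases horiz_char P h1 hH1 with ⟨he1, hd1⟩ | ⟨he1, hd1⟩ <;>
    rcases horiz_char P h2 hH2 with ⟨he2, hd2⟩ | ⟨he2, hd2⟩
  · rw [he1, he2]; ring
  · exfalso
    rw [hx, hy] at hd1
    rw [hd1] at hd2
    have : (1 : ZMod 2) = 0 := by linear_combination -hd2
    exact one_ne_zero this
  · exfalso
    rw [hx, hy] at hd1
    rw [hd1] at hd2
    have : (1 : ZMod 2) = 0 := by linear_combination hd2
    exact one_ne_zero this
  · rw [he1, he2]; ring

end HitoAux

/-- **Parity argument.** Along an oriented hitomezashi path, all horizontal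
stitches at a fixed latitude are oriented in the same direction, and all vertical stitches
at a fixed longitude are oriented in the same direction. (A step `t` is horizontal iff it
does not change the y-coordinate, and its direction is the sign of the change in the
x-coordinate; similarly for vertical steps.) -/
theorem hitomezashi_parity (ε η : ℤ → ZMod 2) (P : HPath ε η) :
    (∀ t1 t2 : ℕ, t1 < P.len → t2 < P.len →
      (P.v (t1+1)).2 = (P.v t1).2 → (P.v (t2+1)).2 = (P.v t2).2 →
      (P.v t1).2 = (P.v t2).2 →
      (P.v (t1+1)).1 - (P.v t1).1 = (P.v (t2+1)).1 - (P.v t2).1) ∧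
    (∀ t1 t2 : ℕ, t1 < P.len → t2 < P.len →
      (P.v (t1+1)).1 = (P.v t1).1 → (P.v (t2+1)).1 = (P.v t2).1 →
      (P.v t1).1 = (P.v t2).1 →
      (P.v (t1+1)).2 - (P.v t1).2 = (P.v (t2+1)).2 - (P.v t2).2) := by
  constructor
  · exact HitoAux.horiz_half P
  · exact HitoAux.horiz_half (HitoAux.swapPath P)
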